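/- Let E be a finite-dimensional real inner product space, let a^1,…,a^m ∈ E be a finite family of generators with convex hull A_c = co{a^1,…,a^m} and conical hull K(A) = {∑_{i=1}^m u_i a^i : u_i ≥ 0}, and assume 0 ∉ A_c. Let a^{co} ∈ A_c satisfy ‖a^{co}‖ ≤ ‖x‖ for all x ∈ A_c and set d_A = ‖a^{co}‖. Let b ∈ E, let ρ > ‖b‖/d_A, and suppose b^K ∈ K(A) satisfies ‖b^K − b‖ ≤ ‖x − b‖ for all x ∈ K(A). Then b^K ∈ co({0} ∪ ρA_c), i.e. b^K = t·y for some t ∈ [0, ρ] and y ∈ A_c ∪ {0}. -/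

import Mathlib

open scoped RealInnerProductSpace Pointwise

/-!
The projection `p` of `b` onto a convex cone satisfies `⟪b - p, p⟫ = 0`, because moving `p`
along its own ray towards `0` or away from it cannot bring it closer to `b`. Hence
`‖p‖² = ⟪b, p⟫ ≤ ‖b‖ ‖p‖`, so `‖p‖ ≤ ‖b‖`. Writing `p = s • y` with `y ∈ A_c` gives
`s d_A ≤ s ‖y‖ = ‖p‖ ≤ ‖b‖`, so `s ≤ ‖b‖ / d_A < ρ`, and `p` lies on the segment `[0, ρ • y]`.
-/

section Projection

variable {E : Type*} [NormedAddCommGroup E] [InnerProductSpace ℝ E]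

theorem inner_sub_self_eq_zero_of_forall_norm_sub_le {S : Set E} (hS : Convex ℝ S)
    (hsmul : ∀ x ∈ S, ∀ t : ℝ, 0 ≤ t → t • x ∈ S) {b p : E} (hp : p ∈ S)
    (hmin : ∀ x ∈ S, ‖p - b‖ ≤ ‖x - b‖) : ⟪b - p, p⟫ = 0 := by
  have hinf : ‖b - p‖ = ⨅ w : S, ‖b - w‖ := by
    have : Nonempty S := ⟨⟨p, hp⟩⟩
    have hbdd : BddBelow (Set.range fun w : S => ‖b - w‖) :=
      ⟨0, Set.forall_mem_range.2 fun _ => norm_nonneg _⟩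
    refine le_antisymm (le_ciInf fun w => ?_) (ciInf_le hbdd ⟨p, hp⟩)
    simpa only [norm_sub_rev b] using hmin w w.2
  have hvar := (norm_eq_iInf_iff_real_inner_le_zero hS hp).1 hinf
  have h_toward_zero := hvar 0 (by simpa using hsmul p hp 0 le_rfl)
  have h_away := hvar ((2 : ℝ) • p) (hsmul p hp 2 zero_le_two)
  rw [zero_sub, inner_neg_right] at h_toward_zero
  rw [two_smul, add_sub_cancel_right] at h_away
  linarith

theorem norm_le_of_forall_norm_sub_le {S : Set E} (hS : Convex ℝ S)
    (hsmul : ∀ x ∈ S, ∀ t : ℝ, 0 ≤ t → t • x ∈ S) {b p : E} (hp : p ∈ S)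
    (hmin : ∀ x ∈ S, ‖p - b‖ ≤ ‖x - b‖) : ‖p‖ ≤ ‖b‖ := by
  have horth := inner_sub_self_eq_zero_of_forall_norm_sub_le hS hsmul hp hmin
  have hsq : ‖p‖ ^ 2 ≤ ‖b‖ * ‖p‖ := by
    rw [inner_sub_left, real_inner_self_eq_norm_sq, sub_eq_zero] at horth
    exact horth ▸ real_inner_le_norm b p
  nlinarith [norm_nonneg p, norm_nonneg b]

end Projection

section ConicalHull

variable {E : Type*} [AddCommGroup E] [Module ℝ E] {ι : Type*} [Fintype ι]

def conicalHull (a : ι → E) : Set E :=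
  {x : E | ∃ u : ι → ℝ, (∀ i, 0 ≤ u i) ∧ x = ∑ i, u i • a i}

theorem convex_conicalHull (a : ι → E) : Convex ℝ (conicalHull a) := by
  rintro _ ⟨u, hu, rfl⟩ _ ⟨v, hv, rfl⟩ s t hs ht -
  refine ⟨fun i => s * u i + t * v i, fun i =>
    add_nonneg (mul_nonneg hs (hu i)) (mul_nonneg ht (hv i)), ?_⟩
  simp only [Finset.smul_sum, smul_smul, add_smul, Finset.sum_add_distrib]

theorem smul_mem_conicalHull {a : ι → E} {x : E} (hx : x ∈ conicalHull a) {t : ℝ}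
    (ht : 0 ≤ t) : t • x ∈ conicalHull a := by
  obtain ⟨u, hu, rfl⟩ := hx
  exact ⟨fun i => t * u i, fun i => mul_nonneg ht (hu i), by
    simp only [Finset.smul_sum, smul_smul]⟩

theorem eq_zero_or_exists_smul_mem_convexHull_of_mem_conicalHull {a : ι → E} {x : E}
    (hx : x ∈ conicalHull a) :
    x = 0 ∨ ∃ s : ℝ, 0 < s ∧ ∃ y ∈ convexHull ℝ (Set.range a), x = s • y := by
  obtain ⟨u, hu, rfl⟩ := hx
  rcases (Finset.sum_nonneg fun i _ => hu i).eq_or_lt with hs | hs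
  · left
    have hu0 := (Finset.sum_eq_zero_iff_of_nonneg fun i _ => hu i).1 hs.symm
    exact Finset.sum_eq_zero fun i hi => by rw [hu0 i hi, zero_smul]
  · refine Or.inr ⟨_, hs, Finset.univ.centerMass u a,
      Finset.centerMass_mem_convexHull _ (fun i _ => hu i) hs fun i _ => Set.mem_range_self i, ?_⟩
    rw [Finset.centerMass, smul_smul, mul_inv_cancel₀ hs.ne', one_smul]

end ConicalHull

theorem smul_mem_convexHull_zero_union_smul {E : Type*} [AddCommGroup E] [Module ℝ E]
    {A : Set E} {y : E} (hy : y ∈ A) {s ρ : ℝ} (hs : 0 ≤ s) (hsρ : s ≤ ρ) (hρ : 0 < ρ) :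
    s • y ∈ convexHull ℝ ({(0 : E)} ∪ ρ • A) := by
  refine segment_subset_convexHull (Set.mem_union_left _ (Set.mem_singleton 0))
    (Set.mem_union_right _ (Set.smul_mem_smul_set hy)) ?_
  rw [segment_eq_image]
  refine ⟨s / ρ, ⟨div_nonneg hs hρ.le, (div_le_one hρ).2 hsρ⟩, ?_⟩
  simp only [smul_zero, zero_add, smul_smul, div_mul_cancel₀ _ hρ.ne']

theorem cone_projection_mem_truncation_general
    {E : Type*} [NormedAddCommGroup E] [InnerProductSpace ℝ E]
    {m : ℕ} (a : Fin m → E)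
    (Ac : Set E) (hAc : Ac = convexHull ℝ (Set.range a))
    (K : Set E)
    (hK : K = {x : E | ∃ u : Fin m → ℝ, (∀ i, 0 ≤ u i) ∧ x = ∑ i, u i • a i})
    (hpointed : (0 : E) ∉ Ac)
    (aco : E) (haco_mem : aco ∈ Ac)
    (haco_min : ∀ x ∈ Ac, ‖aco‖ ≤ ‖x‖)
    (dA : ℝ) (hdA : dA = ‖aco‖)
    (b : E) (ρ : ℝ) (hρ : ρ > ‖b‖ / dA)
    (bK : E) (hbK_mem : bK ∈ K)
    (hbK_min : ∀ x ∈ K, ‖bK - b‖ ≤ ‖x - b‖) :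
    bK ∈ convexHull ℝ ({(0 : E)} ∪ ρ • Ac) ∧
      ∃ t ∈ Set.Icc (0 : ℝ) ρ, ∃ y ∈ Ac ∪ {(0 : E)}, bK = t • y := by
  change K = conicalHull a at hK
  subst hK hdA
  have hdA_pos : 0 < ‖aco‖ := norm_pos_iff.2 fun h => hpointed (h ▸ haco_mem)
  have hρ_pos : 0 < ρ := (div_nonneg (norm_nonneg b) hdA_pos.le).trans_lt hρ
  have hbK_le : ‖bK‖ ≤ ‖b‖ := norm_le_of_forall_norm_sub_le (convex_conicalHull a)
    (fun _ hx _ ht => smul_mem_conicalHull hx ht) hbK_mem hbK_min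
  rcases eq_zero_or_exists_smul_mem_convexHull_of_mem_conicalHull hbK_mem with
    rfl | ⟨s, hs, y, hy, rfl⟩
  · exact ⟨subset_convexHull ℝ _ (Or.inl rfl), 0, ⟨le_rfl, hρ_pos.le⟩, 0, Or.inr rfl,
      (smul_zero 0).symm⟩
  rw [← hAc] at hy
  have hsρ : s ≤ ρ := by
    refine ((le_div_iff₀ hdA_pos).2 ?_).trans hρ.le
    calc s * ‖aco‖ ≤ s * ‖y‖ := mul_le_mul_of_nonneg_left (haco_min y hy) hs.le
      _ = ‖s • y‖ := by rw [norm_smul, Real.norm_of_nonneg hs.le]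
      _ ≤ ‖b‖ := hbK_le
  exact ⟨smul_mem_convexHull_zero_union_smul hy hs.le hsρ hρ_pos, s, ⟨hs.le, hsρ⟩, y,
    Or.inl hy, rfl⟩

/-- The crux of the second demonstration: when `ρ > ‖b‖ / d_A`, the projection `bK` of
`b` onto the cone `K(A)` already lies in the truncated cone `co({0} ∪ ρ • Ac)`, i.e.
`bK = t • y` for some `t ∈ [0, ρ]` and `y ∈ Ac ∪ {0}`. -/
theorem cone_projection_mem_truncation
    {E : Type*} [NormedAddCommGroup E] [InnerProductSpace ℝ E] [FiniteDimensional ℝ E]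
    {m : ℕ} (a : Fin m → E)
    (Ac : Set E) (hAc : Ac = convexHull ℝ (Set.range a))
    (K : Set E)
    (hK : K = {x : E | ∃ u : Fin m → ℝ, (∀ i, 0 ≤ u i) ∧ x = ∑ i, u i • a i})
    (hpointed : (0 : E) ∉ Ac)
    (aco : E) (haco_mem : aco ∈ Ac)
    (haco_min : ∀ x ∈ Ac, ‖aco‖ ≤ ‖x‖)
    (dA : ℝ) (hdA : dA = ‖aco‖)
    (b : E) (ρ : ℝ) (hρ : ρ > ‖b‖ / dA)
    (bK : E) (hbK_mem : bK ∈ K)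
    (hbK_min : ∀ x ∈ K, ‖bK - b‖ ≤ ‖x - b‖) :
    bK ∈ convexHull ℝ ({(0 : E)} ∪ ρ • Ac) ∧
      ∃ t ∈ Set.Icc (0 : ℝ) ρ, ∃ y ∈ Ac ∪ {(0 : E)}, bK = t • y :=
  cone_projection_mem_truncation_general a Ac hAc K hK hpointed aco haco_mem haco_min dA hdA b ρ hρ
    bK hbK_mem hbK_min
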